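/- arXiv:1912.00440 — 5 statements merged into one kernel-verified Lean document; each statement's English description precedes it below -/
import Mathlib

section
/- Let μ and ν be probability measures on a measurable space S, and define the relative entropy I(μ|ν) := sup { ∫ φ dμ − log ∫ e^φ dν : φ : S → ℝ bounded measurable } ∈ [0,∞]. Then for every measurable function g : S → ℝ which is μ-integrable, one has ∫ g dμ ≤ I(μ|ν) + log ∫ e^g dν, where ∫ e^g dν is taken in (0,∞] and the right-hand side is interpreted in ℝ ∪ {+∞} (in particular the inequality is trivial if I(μ|ν) = ∞ or ∫ e^g dν = ∞). -/
open MeasureTheory Filter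
open scoped ENNReal

/-- The relative entropy `I(μ|ν)` defined by the variational formula
`I(μ|ν) = sup { ∫ φ dμ − log ∫ e^φ dν : φ bounded measurable }`, as an extended real. -/
noncomputable def relEntropy {S : Type*} [MeasurableSpace S] (μ ν : Measure S) : EReal :=
  ⨆ φ ∈ {φ : S → ℝ | Measurable φ ∧ ∃ M : ℝ, ∀ x, |φ x| ≤ M},
    (((∫ x, φ x ∂μ) - Real.log (∫ x, Real.exp (φ x) ∂ν) : ℝ) : EReal)

lemma relEntropy_nonneg {S : Type*} [MeasurableSpace S] (μ ν : Measure S)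
    [IsProbabilityMeasure μ] [IsProbabilityMeasure ν] : (0 : EReal) ≤ relEntropy μ ν := by
  have h0 : (fun _ : S => (0 : ℝ)) ∈ {φ : S → ℝ | Measurable φ ∧ ∃ M : ℝ, ∀ x, |φ x| ≤ M} :=
    ⟨measurable_const, 0, fun x => by simp⟩
  have := le_biSup
    (f := fun φ : S → ℝ =>
      (((∫ x, φ x ∂μ) - Real.log (∫ x, Real.exp (φ x) ∂ν) : ℝ) : EReal)) h0
  simpa [relEntropy] using this

/-- Key real-valued step: for integrable `g` with `e^g` `ν`-integrable. -/
lemma key_real {S : Type*} [MeasurableSpace S] (μ ν : Measure S)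
    [IsProbabilityMeasure μ] [IsProbabilityMeasure ν]
    (g : S → ℝ) (hg : Measurable g) (hint : Integrable g μ)
    (hexp : Integrable (fun x => Real.exp (g x)) ν) (r : ℝ)
    (hr : ∀ φ : S → ℝ, Measurable φ → (∃ M : ℝ, ∀ x, |φ x| ≤ M) →
      (∫ x, φ x ∂μ) - Real.log (∫ x, Real.exp (φ x) ∂ν) ≤ r) :
    (∫ x, g x ∂μ) ≤ r + Real.log (∫ x, Real.exp (g x) ∂ν) := by
  set A := ∫ x, Real.exp (g x) ∂ν with hA_def
  have hA : 0 < A := by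
    rw [hA_def]
    rw [integral_pos_iff_support_of_nonneg (fun x => (Real.exp_pos _).le) hexp]
    have : Function.support (fun x => Real.exp (g x)) = Set.univ := by
      ext x; simp [Function.support, (Real.exp_pos (g x)).ne']
    rw [this]
    simp
  set φ : ℕ → S → ℝ := fun n x => max (min (g x) n) (-(n : ℝ)) with hφ_def
  have hφm : ∀ n, Measurable (φ n) := fun n =>
    (hg.min measurable_const).max measurable_const
  have hφbd : ∀ n x, |φ n x| ≤ (n : ℝ) := by
    intro n x
    rw [abs_le]
    constructor
    · exact le_max_right _ _
    · exact max_le (min_le_right _ _) (neg_le_self (Nat.cast_nonneg n))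
  have hφg : ∀ n x, |φ n x| ≤ |g x| := by
    intro n x
    rw [abs_le]
    constructor
    · exact le_max_of_le_left (le_min (neg_abs_le _)
        (le_trans (neg_nonpos_of_nonneg (abs_nonneg _)) (Nat.cast_nonneg n)))
    · exact max_le (le_trans (min_le_left _ _) (le_abs_self _))
        (le_trans (neg_nonpos_of_nonneg (Nat.cast_nonneg n)) (abs_nonneg _))
  -- exp (φ n) is integrable
  have hφexp_int : ∀ n, Integrable (fun x => Real.exp (φ n x)) ν := by
    intro n
    refine Integrable.mono' (integrable_const (Real.exp n)) ((hφm n).exp).aestronglyMeasurable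
      (Filter.Eventually.of_forall fun x => ?_)
    rw [Real.norm_eq_abs, abs_of_pos (Real.exp_pos _)]
    exact Real.exp_le_exp.2 ((abs_le.1 (hφbd n x)).2)
  -- upper bound on ∫ exp (φ n)
  have hstep : ∀ n : ℕ, (∫ x, φ n x ∂μ) ≤ r + Real.log (A + Real.exp (-(n : ℝ))) := by
    intro n
    have h1 := hr (φ n) (hφm n) ⟨n, hφbd n⟩
    have h2 : (∫ x, Real.exp (φ n x) ∂ν) ≤ A + Real.exp (-(n : ℝ)) := by
      have hmono : ∀ x, Real.exp (φ n x) ≤ Real.exp (g x) + Real.exp (-(n : ℝ)) := by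
        intro x
        have hφle : φ n x ≤ max (g x) (-(n : ℝ)) :=
          max_le_max (min_le_left _ _) le_rfl
        rcases le_total (g x) (-(n : ℝ)) with h | h
        · calc Real.exp (φ n x) ≤ Real.exp (-(n : ℝ)) := by
                refine Real.exp_le_exp.2 (le_trans hφle ?_)
                simp [max_eq_right h]
              _ ≤ _ := le_add_of_nonneg_left (Real.exp_pos _).le
        · calc Real.exp (φ n x) ≤ Real.exp (g x) := by
                refine Real.exp_le_exp.2 (le_trans hφle ?_)
                simp [max_eq_left h]
              _ ≤ _ := le_add_of_nonneg_right (Real.exp_pos _).le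
      calc (∫ x, Real.exp (φ n x) ∂ν)
          ≤ ∫ x, (Real.exp (g x) + Real.exp (-(n : ℝ))) ∂ν :=
            integral_mono (hφexp_int n) (hexp.add (integrable_const _)) hmono
        _ = A + Real.exp (-(n : ℝ)) := by
            rw [integral_add hexp (integrable_const _), integral_const]
            simp [hA_def]
    have h3 : 0 < ∫ x, Real.exp (φ n x) ∂ν := by
      have : (Real.exp (-(n : ℝ))) = ∫ _, Real.exp (-(n : ℝ)) ∂ν := by
        rw [integral_const]; simp
      calc (0 : ℝ) < Real.exp (-(n : ℝ)) := Real.exp_pos _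
        _ = ∫ _, Real.exp (-(n : ℝ)) ∂ν := this
        _ ≤ ∫ x, Real.exp (φ n x) ∂ν :=
            integral_mono (integrable_const _) (hφexp_int n)
              (fun x => Real.exp_le_exp.2 (le_max_right _ _))
    have hlog : Real.log (∫ x, Real.exp (φ n x) ∂ν) ≤ Real.log (A + Real.exp (-(n : ℝ))) :=
      Real.log_le_log h3 h2
    linarith
  -- limits
  have hL1 : Tendsto (fun n : ℕ => ∫ x, φ n x ∂μ) atTop (nhds (∫ x, g x ∂μ)) := by
    refine tendsto_integral_of_dominated_convergence (fun x => |g x|)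
      (fun n => (hφm n).aestronglyMeasurable) hint.abs
      (fun n => Filter.Eventually.of_forall fun x => by
        rw [Real.norm_eq_abs]; exact hφg n x)
      (Filter.Eventually.of_forall fun x => ?_)
    refine tendsto_atTop_of_eventually_const (i₀ := ⌈|g x|⌉₊) fun n hn => ?_
    have hn' : |g x| ≤ (n : ℝ) := le_trans (Nat.le_ceil _) (Nat.cast_le.2 hn)
    rw [hφ_def]
    simp only
    rw [min_eq_left (le_trans (le_abs_self _) hn'),
      max_eq_left (le_trans (neg_le_neg hn') (neg_abs_le _))]
  have hL2 : Tendsto (fun n : ℕ => r + Real.log (A + Real.exp (-(n : ℝ)))) atTop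
      (nhds (r + Real.log A)) := by
    refine tendsto_const_nhds.add ?_
    have hexp0 : Tendsto (fun n : ℕ => Real.exp (-(n : ℝ))) atTop (nhds 0) :=
      Real.tendsto_exp_neg_atTop_nhds_zero.comp tendsto_natCast_atTop_atTop
    have hsum : Tendsto (fun n : ℕ => A + Real.exp (-(n : ℝ))) atTop (nhds A) := by
      have := tendsto_const_nhds.add hexp0 (f := fun _ : ℕ => A) (x := atTop)
      simpa using this
    exact ((Real.continuousAt_log hA.ne').tendsto).comp hsum
  exact le_of_tendsto_of_tendsto' hL1 hL2 hstep

/-- the entropy inequality `∫ g dμ ≤ I(μ|ν) + log ∫ e^g dν` for every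
μ-integrable measurable `g`, where `∫ e^g dν` is taken in `(0,∞]`. -/
theorem entropy_inequality {S : Type*} [MeasurableSpace S]
    (μ ν : Measure S) [IsProbabilityMeasure μ] [IsProbabilityMeasure ν]
    (g : S → ℝ) (hg : Measurable g) (hint : Integrable g μ) :
    ((∫ x, g x ∂μ : ℝ) : EReal) ≤
      relEntropy μ ν + ENNReal.log (∫⁻ x, ENNReal.ofReal (Real.exp (g x)) ∂ν) := by
  set L := ∫⁻ x, ENNReal.ofReal (Real.exp (g x)) ∂ν with hL_def
  have hRE0 := relEntropy_nonneg μ ν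
  have hRE_bot : relEntropy μ ν ≠ ⊥ := fun h => by simp [h] at hRE0
  have hL0 : L ≠ 0 := by
    intro h
    rw [hL_def, lintegral_eq_zero_iff (hg.exp.ennreal_ofReal)] at h
    have hne : (MeasureTheory.ae ν).NeBot := ae_neBot.2 (IsProbabilityMeasure.ne_zero ν)
    obtain ⟨x, hx⟩ := h.exists
    exact absurd hx (by simp [(Real.exp_pos (g x)).ne', Real.exp_pos, (Real.exp_pos (g x)).le,
      ENNReal.ofReal_eq_zero, not_le])
  by_cases hRE_top : relEntropy μ ν = ⊤
  · rw [hRE_top, EReal.top_add_of_ne_bot (by simpa using hL0)]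
    exact le_top
  by_cases hL_top : L = ⊤
  · rw [hL_top, ENNReal.log_top, EReal.add_top_of_ne_bot hRE_bot]
    exact le_top
  -- finite case
  have hexp : Integrable (fun x => Real.exp (g x)) ν := by
    refine ⟨hg.exp.aestronglyMeasurable, ?_⟩
    rw [hasFiniteIntegral_iff_ofReal (Filter.Eventually.of_forall fun x => (Real.exp_pos _).le)]
    exact lt_of_le_of_ne le_top hL_top
  have hLA : L = ENNReal.ofReal (∫ x, Real.exp (g x) ∂ν) := by
    rw [hL_def, ← ofReal_integral_eq_lintegral_ofReal hexp
      (Filter.Eventually.of_forall fun x => (Real.exp_pos _).le)]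
  have hApos : 0 < ∫ x, Real.exp (g x) ∂ν := by
    rw [integral_pos_iff_support_of_nonneg (fun x => (Real.exp_pos _).le) hexp]
    have : Function.support (fun x => Real.exp (g x)) = Set.univ := by
      ext x; simp [Function.support, (Real.exp_pos (g x)).ne']
    rw [this]; simp
  rw [hLA, ENNReal.log_ofReal_of_pos hApos]
  set r := (relEntropy μ ν).toReal with hr_def
  have hREr : relEntropy μ ν = (r : EReal) := (EReal.coe_toReal hRE_top hRE_bot).symm
  rw [hREr, ← EReal.coe_add, EReal.coe_le_coe_iff]
  refine key_real μ ν g hg hint hexp r ?_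
  intro φ hφm hφbd
  have hmem : φ ∈ {φ : S → ℝ | Measurable φ ∧ ∃ M : ℝ, ∀ x, |φ x| ≤ M} := ⟨hφm, hφbd⟩
  have hle := le_biSup
    (f := fun φ : S → ℝ =>
      (((∫ x, φ x ∂μ) - Real.log (∫ x, Real.exp (φ x) ∂ν) : ℝ) : EReal)) hmem
  rw [← relEntropy, hREr, EReal.coe_le_coe_iff] at hle
  exact hle
end

section
/- Let P, Q and μ be probability measures on a measurable space S. Suppose Q is absolutely continuous with respect to P with Radon–Nikodym density dQ/dP = e^D P-almost everywhere, for a measurable function D : S → ℝ, and suppose D is μ-integrable. Then the relative entropies satisfy I(μ|Q) = I(μ|P) − ∫ D dμ, in the sense that I(μ|Q) is finite if and only if I(μ|P) is finite, and in that case the equality of real numbers holds. -/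
/-!
Tilting a test function by `D` converts the two variational problems into each other:
`∫ φ dμ − log ∫ e^φ dQ = (∫ (φ + D) dμ − log ∫ e^(φ + D) dP) − ∫ D dμ`.
The tilted function `φ + D` is no longer bounded, but truncating it at levels `±n` and passing to
the limit by dominated convergence shows that the variational formula also admits every measurable
test function that is `μ`-integrable with `ν`-integrable exponential. This gives
`I(μ|Q) ≤ I(μ|P) − ∫ D dμ`, and the reverse inequality is the same statement for
`P = Q.withDensity e^(−D)`.
-/

open MeasureTheory
open scoped ENNReal

open Filter Real
open scoped Topology

noncomputable def truncate (n : ℕ) (t : ℝ) : ℝ := max (-n) (min t n)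

lemma continuous_truncate (n : ℕ) : Continuous (truncate n) :=
  continuous_const.max (continuous_id.min continuous_const)

lemma abs_truncate_le_natCast (n : ℕ) (t : ℝ) : |truncate n t| ≤ n := by
  have hn : (0 : ℝ) ≤ n := n.cast_nonneg
  exact abs_le.2 ⟨le_max_left _ _, max_le (by linarith) (min_le_right _ _)⟩

lemma abs_truncate_le_abs (n : ℕ) (t : ℝ) : |truncate n t| ≤ |t| := by
  unfold truncate
  have hn : (0 : ℝ) ≤ n := n.cast_nonneg
  rw [abs_le]
  constructor
  · exact le_max_of_le_right (le_min (neg_abs_le t) (by linarith [abs_nonneg t]))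
  · exact max_le (by linarith [abs_nonneg t]) ((min_le_left _ _).trans (le_abs_self t))

lemma exp_truncate_le (n : ℕ) (t : ℝ) : exp (truncate n t) ≤ exp t + 1 := by
  have hn : (0 : ℝ) ≤ n := n.cast_nonneg
  have h : truncate n t ≤ max t 0 :=
    max_le (by linarith [le_max_right t 0]) ((min_le_left t n).trans (le_max_left t 0))
  calc exp (truncate n t) ≤ exp (max t 0) := exp_le_exp.2 h
    _ ≤ exp t + 1 := by
      rcases le_total t 0 with ht | ht
      · rw [max_eq_right ht, exp_zero]; linarith [exp_pos t]
      · rw [max_eq_left ht]; linarith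

lemma tendsto_truncate (t : ℝ) : Tendsto (fun n : ℕ => truncate n t) atTop (𝓝 t) := by
  refine tendsto_atTop_of_eventually_const (i₀ := ⌈|t|⌉₊) fun n hn => ?_
  have ht : |t| ≤ n := (Nat.le_ceil _).trans (Nat.cast_le.2 hn)
  rw [truncate, min_eq_left ((le_abs_self t).trans ht),
    max_eq_right (by linarith [neg_abs_le t])]

section VariationalFormula

variable {S : Type*} [MeasurableSpace S] {μ ν : Measure S} {φ : S → ℝ}

lemma le_relEntropy_of_bounded (hφ : Measurable φ) (hbdd : ∃ M, ∀ x, |φ x| ≤ M) :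
    (((∫ x, φ x ∂μ) - log (∫ x, exp (φ x) ∂ν) : ℝ) : EReal) ≤ relEntropy μ ν :=
  le_biSup (f := fun φ : S → ℝ => (((∫ x, φ x ∂μ) - log (∫ x, exp (φ x) ∂ν) : ℝ) : EReal))
    ⟨hφ, hbdd⟩

lemma le_relEntropy_of_integrable [IsFiniteMeasure ν] [NeZero ν] (hφ : Measurable φ)
    (hφμ : Integrable φ μ) (hφν : Integrable (fun x => exp (φ x)) ν) :
    (((∫ x, φ x ∂μ) - log (∫ x, exp (φ x) ∂ν) : ℝ) : EReal) ≤ relEntropy μ ν := by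
  have hmeas (n : ℕ) : Measurable fun x => truncate n (φ x) :=
    (continuous_truncate n).measurable.comp hφ
  have hlim_μ : Tendsto (fun n : ℕ => ∫ x, truncate n (φ x) ∂μ) atTop (𝓝 (∫ x, φ x ∂μ)) :=
    tendsto_integral_of_dominated_convergence (fun x => |φ x|)
      (fun n => (hmeas n).aestronglyMeasurable) hφμ.abs
      (fun n => .of_forall fun x => abs_truncate_le_abs n (φ x))
      (.of_forall fun x => tendsto_truncate (φ x))
  have hlim_ν : Tendsto (fun n : ℕ => ∫ x, exp (truncate n (φ x)) ∂ν) atTop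
      (𝓝 (∫ x, exp (φ x) ∂ν)) :=
    tendsto_integral_of_dominated_convergence (fun x => exp (φ x) + 1)
      (fun n => (hmeas n).exp.aestronglyMeasurable) (hφν.add (integrable_const 1))
      (fun n => .of_forall fun x => by
        rw [norm_of_nonneg (exp_pos _).le]; exact exp_truncate_le n (φ x))
      (.of_forall fun x => (continuous_exp.tendsto _).comp (tendsto_truncate (φ x)))
  have hlim := hlim_μ.sub (hlim_ν.log (integral_exp_pos hφν).ne')
  exact le_of_tendsto' ((continuous_coe_real_ereal.tendsto _).comp hlim) fun n =>
    le_relEntropy_of_bounded (hmeas n) ⟨n, fun x => abs_truncate_le_natCast n (φ x)⟩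

end VariationalFormula

section ExponentialTilt

variable {S : Type*} [MeasurableSpace S] {P : Measure S} {D : S → ℝ}

lemma integral_exp_withDensity_exp (hD : Measurable D) (φ : S → ℝ) :
    ∫ x, exp (φ x) ∂P.withDensity (fun x => ENNReal.ofReal (exp (D x)))
      = ∫ x, exp (φ x + D x) ∂P := by
  rw [integral_withDensity_eq_integral_toReal_smul (hD.exp.ennreal_ofReal)
    (.of_forall fun _ => ENNReal.ofReal_lt_top)]
  refine integral_congr_ae (.of_forall fun x => ?_)
  simp only [ENNReal.toReal_ofReal (exp_pos (D x)).le, smul_eq_mul, exp_add, mul_comm]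

lemma integrable_exp_of_isFiniteMeasure_withDensity (hD : Measurable D)
    [IsFiniteMeasure (P.withDensity fun x => ENNReal.ofReal (exp (D x)))] :
    Integrable (fun x => exp (D x)) P := by
  refine ⟨hD.exp.aestronglyMeasurable,
    (hasFiniteIntegral_iff_ofReal (.of_forall fun x => (exp_pos (D x)).le)).2 ?_⟩
  rw [← setLIntegral_univ, ← withDensity_apply _ MeasurableSet.univ]
  exact measure_lt_top _ _

lemma withDensity_exp_neg_withDensity_exp (hD : Measurable D) :
    (P.withDensity fun x => ENNReal.ofReal (exp (D x))).withDensity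
      (fun x => ENNReal.ofReal (exp (-D x))) = P := by
  have hinv : (fun x => ENNReal.ofReal (exp (-D x))) = fun x => (ENNReal.ofReal (exp (D x)))⁻¹ :=
    funext fun x => by rw [exp_neg, ENNReal.ofReal_inv_of_pos (exp_pos _)]
  rw [hinv]
  exact withDensity_inv_same hD.exp.ennreal_ofReal
    (.of_forall fun x => by simp [exp_pos]) (.of_forall fun _ => ENNReal.ofReal_ne_top)

theorem relEntropy_le_sub_integral_of_eq_withDensity_exp {Q μ : Measure S} [IsFiniteMeasure μ]
    [IsFiniteMeasure P] [NeZero P] [IsFiniteMeasure Q] (hD : Measurable D)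
    (hQP : Q = P.withDensity fun x => ENNReal.ofReal (exp (D x))) (hint : Integrable D μ) :
    relEntropy μ Q ≤ relEntropy μ P - ((∫ x, D x ∂μ : ℝ) : EReal) := by
  subst hQP
  have hexpD := integrable_exp_of_isFiniteMeasure_withDensity (P := P) hD
  refine iSup₂_le fun φ ⟨hφ, M, hM⟩ => ?_
  have hφμ : Integrable φ μ := .of_bound hφ.aestronglyMeasurable M (.of_forall hM)
  have hexp_tilt : Integrable (fun x => exp (φ x + D x)) P := by
    refine (hexpD.const_mul (exp M)).mono' (hφ.add hD).exp.aestronglyMeasurable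
      (.of_forall fun x => ?_)
    rw [norm_of_nonneg (exp_pos _).le, exp_add]
    exact mul_le_mul_of_nonneg_right (exp_le_exp.2 ((le_abs_self _).trans (hM x))) (exp_pos _).le
  have htilt := le_relEntropy_of_integrable (φ := fun x => φ x + D x) (hφ.add hD)
    (hφμ.add hint) hexp_tilt
  rw [integral_add hφμ hint] at htilt
  calc (((∫ x, φ x ∂μ) - log (∫ x, exp (φ x) ∂P.withDensity _) : ℝ) : EReal)
      = (((∫ x, φ x ∂μ + ∫ x, D x ∂μ) - log (∫ x, exp (φ x + D x) ∂P) : ℝ) : EReal)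
        - ((∫ x, D x ∂μ : ℝ) : EReal) := by
        rw [integral_exp_withDensity_exp hD, ← EReal.coe_sub]; congr 1; ring
    _ ≤ relEntropy μ P - ((∫ x, D x ∂μ : ℝ) : EReal) := EReal.sub_le_sub htilt le_rfl

end ExponentialTilt

/-- if `dQ/dP = e^D` for a measurable `D` that is `μ`-integrable, then
`I(μ|Q) = I(μ|P) − ∫ D dμ` (as extended reals; in particular `I(μ|Q)` is finite iff
`I(μ|P)` is, and then the real equality holds). -/
theorem relEntropy_exponential_tilt {S : Type*} [MeasurableSpace S]
    (P Q μ : Measure S) [IsProbabilityMeasure P] [IsProbabilityMeasure Q]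
    [IsProbabilityMeasure μ]
    (D : S → ℝ) (hD : Measurable D)
    (hQP : Q = P.withDensity (fun x => ENNReal.ofReal (Real.exp (D x))))
    (hint : Integrable D μ) :
    relEntropy μ Q = relEntropy μ P - ((∫ x, D x ∂μ : ℝ) : EReal) := by
  have hPQ : P = Q.withDensity fun x => ENNReal.ofReal (exp (-D x)) := by
    rw [hQP, withDensity_exp_neg_withDensity_exp hD]
  refine le_antisymm (relEntropy_le_sub_integral_of_eq_withDensity_exp hD hQP hint)
    (EReal.sub_le_of_le_add ?_)
  have hback := relEntropy_le_sub_integral_of_eq_withDensity_exp (D := fun x => -D x) hD.neg hPQ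
    hint.neg
  rwa [integral_neg, EReal.coe_neg, sub_eq_add_neg, neg_neg] at hback
end

section
/- Let P and μ be probability measures on a measurable space S and let D : S → ℝ be measurable with ∫ e^D dP < ∞ and ∫ e^{−D} dP < ∞. If I(μ|P) < ∞, then D is μ-integrable and ∫ |D| dμ ≤ I(μ|P) + log( ∫ e^D dP + ∫ e^{−D} dP ) < ∞. -/
open MeasureTheory
open scoped ENNReal

/-- if `e^D` and `e^{−D}` are `P`-integrable and `I(μ|P) < ∞`, then `D` is
`μ`-integrable and `∫ |D| dμ ≤ I(μ|P) + log(∫ e^D dP + ∫ e^{−D} dP) < ∞`. -/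
theorem integrable_of_finite_entropy {S : Type*} [MeasurableSpace S]
    (P μ : Measure S) [IsProbabilityMeasure P] [IsProbabilityMeasure μ]
    (D : S → ℝ) (hD : Measurable D)
    (hexp : Integrable (fun x => Real.exp (D x)) P)
    (hexp' : Integrable (fun x => Real.exp (-(D x))) P)
    (hent : relEntropy μ P < ⊤) :
    Integrable D μ ∧
    ((∫ x, |D x| ∂μ : ℝ) : EReal) ≤
      relEntropy μ P +
        ((Real.log ((∫ x, Real.exp (D x) ∂P) + ∫ x, Real.exp (-(D x)) ∂P) : ℝ) : EReal) ∧
    relEntropy μ P +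
        ((Real.log ((∫ x, Real.exp (D x) ∂P) + ∫ x, Real.exp (-(D x)) ∂P) : ℝ) : EReal)
      < ⊤ := by
  classical
  set C : ℝ := (∫ x, Real.exp (D x) ∂P) + ∫ x, Real.exp (-(D x)) ∂P with hCdef
  -- e^t + e^{-t} ≥ 1
  have key : ∀ t : ℝ, (1:ℝ) ≤ Real.exp t + Real.exp (-t) := by
    intro t
    rcases le_total 0 t with h | h
    · have h1 := Real.one_le_exp h
      nlinarith [Real.exp_pos (-t)]
    · have h1 := Real.one_le_exp (neg_nonneg.2 h)
      nlinarith [Real.exp_pos t]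
  have hCint : Integrable (fun x => Real.exp (D x) + Real.exp (-(D x))) P := hexp.add hexp'
  have hC1 : (1:ℝ) ≤ C := by
    have : C = ∫ x, (Real.exp (D x) + Real.exp (-(D x))) ∂P := (integral_add hexp hexp').symm
    rw [this]
    calc (1:ℝ) = ∫ _x, (1:ℝ) ∂P := by simp
    _ ≤ _ := integral_mono (integrable_const 1) hCint fun x => key (D x)
  have hlogC : (0:ℝ) ≤ Real.log C := Real.log_nonneg hC1
  -- relEntropy is ≥ 0 (test with φ = 0), hence finite
  have h0mem : (fun _ : S => (0:ℝ)) ∈ {φ : S → ℝ | Measurable φ ∧ ∃ M : ℝ, ∀ x, |φ x| ≤ M} :=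
    ⟨measurable_const, 0, fun x => by simp⟩
  have h0 : (0 : EReal) ≤ relEntropy μ P := by
    have := le_iSup₂ (f := fun (φ : S → ℝ) (_ : φ ∈ {φ : S → ℝ | Measurable φ ∧ ∃ M : ℝ, ∀ x, |φ x| ≤ M}) =>
      (((∫ x, φ x ∂μ) - Real.log (∫ x, Real.exp (φ x) ∂P) : ℝ) : EReal)) _ h0mem
    simpa [relEntropy] using this
  have hne_bot : relEntropy μ P ≠ ⊥ := fun h => by simp [h] at h0
  set r : ℝ := (relEntropy μ P).toReal with hrdef
  have hIr : relEntropy μ P = (r : EReal) := (EReal.coe_toReal hent.ne hne_bot).symm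
  have hr0 : (0:ℝ) ≤ r := by
    rw [hIr] at h0; exact_mod_cast h0
  -- the truncations
  have hmeas : ∀ n : ℕ, Measurable fun x => min (|D x|) (n:ℝ) := fun n =>
    hD.abs.min measurable_const
  have hbd : ∀ n : ℕ, ∀ x, |min (|D x|) (n:ℝ)| ≤ (n:ℝ) := by
    intro n x
    rw [abs_of_nonneg (le_min (abs_nonneg _) (Nat.cast_nonneg n))]
    exact min_le_right _ _
  have hintμ : ∀ n : ℕ, Integrable (fun x => min (|D x|) (n:ℝ)) μ := by
    intro n
    refine (integrable_const (n:ℝ)).mono' (hmeas n).aestronglyMeasurable ?_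
    exact ae_of_all _ fun x => by simpa using hbd n x
  have hintP : ∀ n : ℕ, Integrable (fun x => Real.exp (min (|D x|) (n:ℝ))) P := by
    intro n
    refine (integrable_const (Real.exp (n:ℝ))).mono'
      ((Real.measurable_exp.comp (hmeas n)).aestronglyMeasurable) ?_
    refine ae_of_all _ fun x => ?_
    rw [Real.norm_eq_abs, abs_of_pos (Real.exp_pos _)]
    exact Real.exp_le_exp.2 (min_le_right _ _)
  -- ∫ e^{φ_n} dP is between 1 and C
  have hPlow : ∀ n : ℕ, (1:ℝ) ≤ ∫ x, Real.exp (min (|D x|) (n:ℝ)) ∂P := by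
    intro n
    calc (1:ℝ) = ∫ _x, (1:ℝ) ∂P := by simp
    _ ≤ _ := integral_mono (integrable_const 1) (hintP n) fun x =>
        Real.one_le_exp (le_min (abs_nonneg _) (Nat.cast_nonneg n))
  have hPhigh : ∀ n : ℕ, ∫ x, Real.exp (min (|D x|) (n:ℝ)) ∂P ≤ C := by
    intro n
    have : C = ∫ x, (Real.exp (D x) + Real.exp (-(D x))) ∂P := (integral_add hexp hexp').symm
    rw [this]
    refine integral_mono (hintP n) hCint fun x => ?_
    have h1 : Real.exp (min (|D x|) (n:ℝ)) ≤ Real.exp (|D x|) :=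
      Real.exp_le_exp.2 (min_le_left _ _)
    have h2 : Real.exp (|D x|) ≤ Real.exp (D x) + Real.exp (-(D x)) := by
      rcases abs_cases (D x) with ⟨h, _⟩ | ⟨h, _⟩
      · rw [h]; nlinarith [Real.exp_pos (-(D x))]
      · rw [h]; nlinarith [Real.exp_pos (D x)]
    linarith
  -- main bound on the truncated integrals
  have hmain : ∀ n : ℕ, ∫ x, min (|D x|) (n:ℝ) ∂μ ≤ r + Real.log C := by
    intro n
    have hmem : (fun x => min (|D x|) (n:ℝ)) ∈
        {φ : S → ℝ | Measurable φ ∧ ∃ M : ℝ, ∀ x, |φ x| ≤ M} :=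
      ⟨hmeas n, (n:ℝ), hbd n⟩
    have hle : (((∫ x, min (|D x|) (n:ℝ) ∂μ)
        - Real.log (∫ x, Real.exp (min (|D x|) (n:ℝ)) ∂P) : ℝ) : EReal) ≤ relEntropy μ P := by
      have := le_iSup₂ (f := fun (φ : S → ℝ) (_ : φ ∈ {φ : S → ℝ | Measurable φ ∧ ∃ M : ℝ, ∀ x, |φ x| ≤ M}) =>
        (((∫ x, φ x ∂μ) - Real.log (∫ x, Real.exp (φ x) ∂P) : ℝ) : EReal)) _ hmem
      simpa [relEntropy] using this
    rw [hIr] at hle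
    have hle' : (∫ x, min (|D x|) (n:ℝ) ∂μ)
        - Real.log (∫ x, Real.exp (min (|D x|) (n:ℝ)) ∂P) ≤ r := by exact_mod_cast hle
    have hlog : Real.log (∫ x, Real.exp (min (|D x|) (n:ℝ)) ∂P) ≤ Real.log C :=
      Real.log_le_log (lt_of_lt_of_le one_pos (hPlow n)) (hPhigh n)
    linarith
  -- monotone convergence to get finiteness of ∫⁻ |D| dμ
  have hptsup : ∀ x, (⨆ n : ℕ, ENNReal.ofReal (min (|D x|) (n:ℝ))) = ENNReal.ofReal (|D x|) := by
    intro x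
    apply le_antisymm
    · exact iSup_le fun n => ENNReal.ofReal_le_ofReal (min_le_left _ _)
    · obtain ⟨n, hn⟩ := exists_nat_ge (|D x|)
      calc ENNReal.ofReal (|D x|) = ENNReal.ofReal (min (|D x|) (n:ℝ)) := by
            rw [min_eq_left hn]
      _ ≤ _ := le_iSup (fun n : ℕ => ENNReal.ofReal (min (|D x|) (n:ℝ))) n
  have hmono : Monotone fun (n : ℕ) (x : S) => ENNReal.ofReal (min (|D x|) (n:ℝ)) := by
    intro m n hmn x
    exact ENNReal.ofReal_le_ofReal (min_le_min le_rfl (Nat.cast_le.2 hmn))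
  have hlint : ∫⁻ x, ENNReal.ofReal (|D x|) ∂μ
      = ⨆ n : ℕ, ∫⁻ x, ENNReal.ofReal (min (|D x|) (n:ℝ)) ∂μ := by
    rw [← lintegral_iSup (fun n => (hmeas n).ennreal_ofReal) hmono]
    exact lintegral_congr fun x => (hptsup x).symm
  have hlint_eq : ∀ n : ℕ, ∫⁻ x, ENNReal.ofReal (min (|D x|) (n:ℝ)) ∂μ
      = ENNReal.ofReal (∫ x, min (|D x|) (n:ℝ) ∂μ) := by
    intro n
    rw [← ofReal_integral_eq_lintegral_ofReal (hintμ n)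
      (ae_of_all _ fun x => le_min (abs_nonneg _) (Nat.cast_nonneg n))]
  have hlint_le : ∫⁻ x, ENNReal.ofReal (|D x|) ∂μ ≤ ENNReal.ofReal (r + Real.log C) := by
    rw [hlint]
    exact iSup_le fun n => by
      rw [hlint_eq n]; exact ENNReal.ofReal_le_ofReal (hmain n)
  have hintD : Integrable D μ := by
    refine ⟨hD.aestronglyMeasurable, ?_⟩
    rw [hasFiniteIntegral_iff_norm]
    simp only [Real.norm_eq_abs]
    exact lt_of_le_of_lt hlint_le ENNReal.ofReal_lt_top
  -- the integral bound
  have habs : ∫ x, |D x| ∂μ ≤ r + Real.log C := by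
    have h1 : ∫ x, |D x| ∂μ = (∫⁻ x, ENNReal.ofReal (|D x|) ∂μ).toReal := by
      rw [integral_eq_lintegral_of_nonneg_ae (ae_of_all _ fun x => abs_nonneg (D x))
        hD.abs.aestronglyMeasurable]
    rw [h1]
    calc (∫⁻ x, ENNReal.ofReal (|D x|) ∂μ).toReal
        ≤ (ENNReal.ofReal (r + Real.log C)).toReal :=
          ENNReal.toReal_mono ENNReal.ofReal_ne_top hlint_le
    _ = r + Real.log C := ENNReal.toReal_ofReal (by linarith)
  refine ⟨hintD, ?_, ?_⟩
  · rw [hIr, ← EReal.coe_add]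
    exact_mod_cast habs
  · rw [hIr, ← EReal.coe_add]
    exact EReal.coe_lt_top _
end

section
/- Fix τ > 0, T > 0, d ∈ ℕ, K ≥ 0 and t ∈ [0,T]. On C([−τ,T];ℝ) × ℝ^d define, for the given t, the distance-type function d_{K,t}((z,σ),(z',σ')) = |σ − σ'| + sup{ |z(s) − z'(u)| : s, u ∈ [−τ,t], |s − u| ≤ K|σ − σ'| }, and for Borel probability measures μ, ν on C([−τ,T];ℝ) × ℝ^d let d^t_BL(μ,ν) = sup{ ∫ φ dμ − ∫ φ dν : φ bounded and Lipschitz with respect to d_{K,t}, with ‖φ‖_∞ + Lip(φ) ≤ 1 }. Let F : ℝ × ℝ × ℝ^d × ℝ^d → ℝ be bounded and Lipschitz (with respect to the sum of the distances in each coordinate) with ‖F‖_BL = ‖F‖_∞ + Lip(F), and let τ̄ : ℝ^d × ℝ^d → [0,τ] be Lipschitz with constant at most K. Define f(t, x, μ, ω) = ∫ F( x(t), z(t − τ̄(ω,σ)), ω, σ ) dμ(z,σ). Then for all x, y ∈ C([−τ,T];ℝ), all Borel probability measures μ, ν on C([−τ,T];ℝ) × ℝ^d, and all ω ∈ ℝ^d: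 |f(t,x,μ,ω) − f(t,y,ν,ω)| ≤ ‖F‖_BL ( d^t_BL(μ,ν) + sup_{s ∈ [−τ,t]} |x(s) − y(s)| ). -/
open MeasureTheory
open scoped ENNReal

/-- The path space `C([-τ,T];ℝ)` with the uniform norm. -/
abbrev PathSp (τ T : ℝ) := C(Set.Icc (-τ) T, ℝ)

noncomputable instance (τ T : ℝ) : MeasurableSpace (PathSp τ T) := borel _

instance (τ T : ℝ) : BorelSpace (PathSp τ T) := ⟨rfl⟩

/-- Evaluation of a path at time `s` (times outside `[-τ,T]` are clamped). -/
noncomputable def eval (τ T : ℝ) (h : -τ ≤ T) (z : PathSp τ T) (s : ℝ) : ℝ :=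
  z (Set.projIcc (-τ) T h s)

/-- The distance `d_{K,t}((z,σ),(z',σ')) = |σ-σ'| +
    sup{ |z(s)-z'(u)| : s,u ∈ [-τ,t], |s-u| ≤ K|σ-σ'| }`. -/
noncomputable def dKt (τ T : ℝ) (h : -τ ≤ T) {d : ℕ} (K t : ℝ)
    (p q : PathSp τ T × EuclideanSpace ℝ (Fin d)) : ℝ :=
  dist p.2 q.2 +
    sSup {r : ℝ | ∃ s u : ℝ, s ∈ Set.Icc (-τ) t ∧ u ∈ Set.Icc (-τ) t ∧
      |s - u| ≤ K * dist p.2 q.2 ∧ r = |eval τ T h p.1 s - eval τ T h q.1 u|}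

/-- The bounded-Lipschitz distance `d^t_BL` associated to `d_{K,t}`. -/
noncomputable def dBLt (τ T : ℝ) (h : -τ ≤ T) {d : ℕ} (K t : ℝ)
    (μ ν : Measure (PathSp τ T × EuclideanSpace ℝ (Fin d))) : ℝ :=
  sSup {r : ℝ | ∃ (φ : PathSp τ T × EuclideanSpace ℝ (Fin d) → ℝ) (c L : ℝ),
    0 ≤ c ∧ 0 ≤ L ∧ (∀ p, |φ p| ≤ c) ∧
    (∀ p q, |φ p - φ q| ≤ L * dKt τ T h K t p q) ∧ c + L ≤ 1 ∧
    r = (∫ p, φ p ∂μ) - ∫ p, φ p ∂ν}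

/-!
Split the difference at the intermediate value `∫ F(y(t), z(t - τ̄), ω, σ) dν`, i.e. change the
measure first and the path second. For the measure change, `p ↦ F(x(t), z(t - τ̄(ω,σ)), ω, σ)` is
bounded by `‖F‖_∞` and `Lip(F)`-Lipschitz for `d_{K,t}`: since `τ̄` is `K`-Lipschitz, the two delayed
times `t - τ̄(ω,σ)`, `t - τ̄(ω,σ')` lie in `[-τ, t]` at distance at most `K|σ - σ'|`, so they are
admissible in the supremum defining `d_{K,t}`. Dividing by `‖F‖_BL` gives a test function for
`d^t_BL`. The path change costs `Lip(F)|x(t) - y(t)|` pointwise.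
-/

lemma abs_integral_le_of_forall_abs_le {α : Type*} [MeasurableSpace α] {κ : Measure α}
    [IsProbabilityMeasure κ] {φ : α → ℝ} {c : ℝ} (hφ : ∀ p, |φ p| ≤ c) :
    |∫ p, φ p ∂κ| ≤ c := by
  simpa using norm_integral_le_of_norm_le_const (μ := κ) (f := φ) (ae_of_all _ hφ)

lemma continuous_uncurry_of_abs_sub_le {X : Type*} [PseudoMetricSpace X] {G : ℝ → X → ℝ}
    {L : ℝ} (hL : 0 ≤ L) (hG : ∀ z z' σ σ', |G z σ - G z' σ'| ≤ L * (|z - z'| + dist σ σ')) :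
    Continuous (Function.uncurry G) := by
  refine (LipschitzWith.of_dist_le' (K := 2 * L) fun p q => ?_).continuous
  have hz : |p.1 - q.1| ≤ dist p q := (Real.dist_eq _ _).symm.trans_le (le_max_left _ _)
  have hσ : dist p.2 q.2 ≤ dist p q := le_max_right _ _
  rw [Real.dist_eq]
  calc |G p.1 p.2 - G q.1 q.2| ≤ L * (|p.1 - q.1| + dist p.2 q.2) := hG _ _ _ _
    _ ≤ 2 * L * dist p q := by nlinarith

section Eval

variable {τ T : ℝ} (h : -τ ≤ T)

lemma abs_eval_le_norm (z : PathSp τ T) (s : ℝ) : |eval τ T h z s| ≤ ‖z‖ :=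
  z.norm_coe_le_norm _

lemma abs_eval_sub_eval_le (z z' : PathSp τ T) (s u : ℝ) :
    |eval τ T h z s - eval τ T h z' u| ≤ ‖z‖ + ‖z'‖ :=
  (abs_sub _ _).trans (add_le_add (abs_eval_le_norm h z s) (abs_eval_le_norm h z' u))

lemma continuous_eval_comp {X : Type*} [TopologicalSpace X] {g : X → ℝ} (hg : Continuous g) :
    Continuous fun p : PathSp τ T × X => eval τ T h p.1 (g p.2) :=
  continuous_fst.eval (continuous_projIcc.comp (hg.comp continuous_snd))

lemma abs_eval_sub_le_sSup_image (x y : PathSp τ T) {S : Set ℝ} {s : ℝ} (hs : s ∈ S) :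
    |eval τ T h x s - eval τ T h y s| ≤
      sSup ((fun s => |eval τ T h x s - eval τ T h y s|) '' S) := by
  refine le_csSup ⟨‖x‖ + ‖y‖, ?_⟩ ⟨s, hs, rfl⟩
  rintro _ ⟨s, -, rfl⟩
  exact abs_eval_sub_eval_le h x y s s

end Eval

section Distances

variable {τ T : ℝ} (h : -τ ≤ T) {d : ℕ} {K t : ℝ}

lemma dist_add_abs_eval_sub_le_dKt {p q : PathSp τ T × EuclideanSpace ℝ (Fin d)} {s u : ℝ}
    (hs : s ∈ Set.Icc (-τ) t) (hu : u ∈ Set.Icc (-τ) t) (hsu : |s - u| ≤ K * dist p.2 q.2) :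
    dist p.2 q.2 + |eval τ T h p.1 s - eval τ T h q.1 u| ≤ dKt τ T h K t p q := by
  unfold dKt
  gcongr
  refine le_csSup ⟨‖p.1‖ + ‖q.1‖, ?_⟩ ⟨s, u, hs, hu, hsu, rfl⟩
  rintro _ ⟨s', u', -, -, -, rfl⟩
  exact abs_eval_sub_eval_le h _ _ s' u'

lemma dist_add_abs_eval_delay_sub_le_dKt {θ : EuclideanSpace ℝ (Fin d) → ℝ}
    (hθ : ∀ σ, θ σ ∈ Set.Icc 0 τ) (hθK : ∀ σ σ', |θ σ - θ σ'| ≤ K * dist σ σ') (ht : 0 ≤ t)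
    (p q : PathSp τ T × EuclideanSpace ℝ (Fin d)) :
    dist p.2 q.2 + |eval τ T h p.1 (t - θ p.2) - eval τ T h q.1 (t - θ q.2)| ≤
      dKt τ T h K t p q := by
  have mem : ∀ σ, t - θ σ ∈ Set.Icc (-τ) t := fun σ =>
    ⟨by linarith [(hθ σ).2], by linarith [(hθ σ).1]⟩
  refine dist_add_abs_eval_sub_le_dKt h (mem p.2) (mem q.2) ?_
  rw [sub_sub_sub_cancel_left, dist_comm]
  exact hθK q.2 p.2

variable {μ ν : Measure (PathSp τ T × EuclideanSpace ℝ (Fin d))}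
  [IsProbabilityMeasure μ] [IsProbabilityMeasure ν]

lemma integral_sub_le_dBLt {φ : PathSp τ T × EuclideanSpace ℝ (Fin d) → ℝ} {c L : ℝ}
    (hc : 0 ≤ c) (hL : 0 ≤ L) (hφc : ∀ p, |φ p| ≤ c)
    (hφL : ∀ p q, |φ p - φ q| ≤ L * dKt τ T h K t p q) (hcL : c + L ≤ 1) :
    (∫ p, φ p ∂μ) - ∫ p, φ p ∂ν ≤ dBLt τ T h K t μ ν := by
  refine le_csSup ⟨2, ?_⟩ ⟨φ, c, L, hc, hL, hφc, hφL, hcL, rfl⟩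
  rintro r ⟨ψ, c, L, -, hL, hψc, -, hcL, rfl⟩
  have hμ := abs_le.mp (abs_integral_le_of_forall_abs_le (κ := μ) hψc)
  have hν := abs_le.mp (abs_integral_le_of_forall_abs_le (κ := ν) hψc)
  linarith

lemma integral_sub_le_mul_dBLt {φ : PathSp τ T × EuclideanSpace ℝ (Fin d) → ℝ} {M L : ℝ}
    (hM : 0 ≤ M) (hL : 0 ≤ L) (hφM : ∀ p, |φ p| ≤ M)
    (hφL : ∀ p q, |φ p - φ q| ≤ L * dKt τ T h K t p q) :
    (∫ p, φ p ∂μ) - ∫ p, φ p ∂ν ≤ (M + L) * dBLt τ T h K t μ ν := by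
  rcases (add_nonneg hM hL).eq_or_lt with hML | hML
  · have hφ0 : ∀ p, φ p = 0 := fun p => abs_nonpos_iff.mp ((hφM p).trans (by linarith))
    simp [hφ0, ← hML]
  have hscaled := integral_sub_le_dBLt h (μ := μ) (ν := ν) (φ := fun p => φ p / (M + L))
    (c := M / (M + L)) (L := L / (M + L)) (by positivity) (by positivity)
    (fun p => by rw [abs_div, abs_of_pos hML]; gcongr; exact hφM p)
    (fun p q => by
      rw [← sub_div, abs_div, abs_of_pos hML, div_mul_eq_mul_div]; gcongr; exact hφL p q)
    (by rw [← add_div, div_self hML.ne'])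
  rw [integral_div, integral_div, ← sub_div, div_le_iff₀ hML] at hscaled
  linarith

lemma abs_integral_sub_le_mul_dBLt {φ : PathSp τ T × EuclideanSpace ℝ (Fin d) → ℝ} {M L : ℝ}
    (hM : 0 ≤ M) (hL : 0 ≤ L) (hφM : ∀ p, |φ p| ≤ M)
    (hφL : ∀ p q, |φ p - φ q| ≤ L * dKt τ T h K t p q) :
    |(∫ p, φ p ∂μ) - ∫ p, φ p ∂ν| ≤ (M + L) * dBLt τ T h K t μ ν := by
  have hneg := integral_sub_le_mul_dBLt h (μ := μ) (ν := ν) (φ := fun p => -φ p) hM hL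
    (fun p => (abs_neg _).trans_le (hφM p))
    (fun p q => by rw [neg_sub_neg, abs_sub_comm]; exact hφL p q)
  rw [integral_neg, integral_neg] at hneg
  exact abs_sub_le_iff.mpr ⟨integral_sub_le_mul_dBLt h hM hL hφM hφL, by linarith⟩

end Distances

section DelayedIntegrand

variable {τ T : ℝ} (h : -τ ≤ T) {d : ℕ} {K t L : ℝ} {G : ℝ → EuclideanSpace ℝ (Fin d) → ℝ}
  {θ : EuclideanSpace ℝ (Fin d) → ℝ}

lemma abs_delayed_sub_le_mul_dKt (hL : 0 ≤ L)
    (hG : ∀ z z' σ σ', |G z σ - G z' σ'| ≤ L * (|z - z'| + dist σ σ'))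
    (hθ : ∀ σ, θ σ ∈ Set.Icc 0 τ) (hθK : ∀ σ σ', |θ σ - θ σ'| ≤ K * dist σ σ') (ht : 0 ≤ t)
    (p q : PathSp τ T × EuclideanSpace ℝ (Fin d)) :
    |G (eval τ T h p.1 (t - θ p.2)) p.2 - G (eval τ T h q.1 (t - θ q.2)) q.2| ≤
      L * dKt τ T h K t p q := by
  refine (hG _ _ _ _).trans (mul_le_mul_of_nonneg_left ?_ hL)
  linarith [dist_add_abs_eval_delay_sub_le_dKt h hθ hθK ht p q]

lemma integrable_delayed {κ : Measure (PathSp τ T × EuclideanSpace ℝ (Fin d))}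
    [IsProbabilityMeasure κ] {M : ℝ} (hGM : ∀ z σ, |G z σ| ≤ M) (hL : 0 ≤ L)
    (hG : ∀ z z' σ σ', |G z σ - G z' σ'| ≤ L * (|z - z'| + dist σ σ'))
    (hθK : ∀ σ σ', |θ σ - θ σ'| ≤ K * dist σ σ') :
    Integrable (fun p => G (eval τ T h p.1 (t - θ p.2)) p.2) κ := by
  have hθc : Continuous θ :=
    (LipschitzWith.of_dist_le' fun σ σ' => (Real.dist_eq _ _).trans_le (hθK σ σ')).continuous
  have hcont : Continuous fun p : PathSp τ T × EuclideanSpace ℝ (Fin d) =>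
      G (eval τ T h p.1 (t - θ p.2)) p.2 :=
    (continuous_uncurry_of_abs_sub_le hL hG).comp
      ((continuous_eval_comp h (continuous_const.sub hθc)).prodMk continuous_snd)
  exact .of_bound hcont.aestronglyMeasurable M (ae_of_all _ fun p => hGM _ _)

end DelayedIntegrand

theorem delayed_kuramoto_drift_lipschitz_general
    (τ T : ℝ) (hτ : 0 < τ) (hτT : -τ ≤ T) (d : ℕ)
    (K : ℝ) (t : ℝ) (ht : t ∈ Set.Icc (0 : ℝ) T)
    (F : ℝ → ℝ → EuclideanSpace ℝ (Fin d) → EuclideanSpace ℝ (Fin d) → ℝ)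
    (MF LF : ℝ) (hMF : 0 ≤ MF) (hLF : 0 ≤ LF)
    (hFbdd : ∀ a b ω σ, |F a b ω σ| ≤ MF)
    (hFlip : ∀ a a' b b' ω ω' σ σ',
      |F a b ω σ - F a' b' ω' σ'| ≤
        LF * (|a - a'| + |b - b'| + dist ω ω' + dist σ σ'))
    (τbar : EuclideanSpace ℝ (Fin d) → EuclideanSpace ℝ (Fin d) → ℝ)
    (hτbar : ∀ ω σ, τbar ω σ ∈ Set.Icc (0 : ℝ) τ)
    (hτbarLip : ∀ ω ω' σ σ',
      |τbar ω σ - τbar ω' σ'| ≤ K * (dist ω ω' + dist σ σ'))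
    (x y : PathSp τ T)
    (μ ν : Measure (PathSp τ T × EuclideanSpace ℝ (Fin d)))
    (hμ : IsProbabilityMeasure μ) (hν : IsProbabilityMeasure ν)
    (ω : EuclideanSpace ℝ (Fin d)) :
    |(∫ p, F (eval τ T hτT x t) (eval τ T hτT p.1 (t - τbar ω p.2)) ω p.2 ∂μ) -
        ∫ p, F (eval τ T hτT y t) (eval τ T hτT p.1 (t - τbar ω p.2)) ω p.2 ∂ν| ≤
      (MF + LF) * (dBLt τ T hτT K t μ ν +
        sSup ((fun s => |eval τ T hτT x s - eval τ T hτT y s|) '' Set.Icc (-τ) t)) := by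
  set a := eval τ T hτT x t
  set a' := eval τ T hτT y t
  set g := fun (b : ℝ) (p : PathSp τ T × EuclideanSpace ℝ (Fin d)) =>
    F b (eval τ T hτT p.1 (t - τbar ω p.2)) ω p.2
  have hθK : ∀ σ σ', |τbar ω σ - τbar ω σ'| ≤ K * dist σ σ' := fun σ σ' => by
    simpa using hτbarLip ω ω σ σ'
  have hG : ∀ b z z' σ σ', |F b z ω σ - F b z' ω σ'| ≤ LF * (|z - z'| + dist σ σ') :=
    fun b z z' σ σ' => by simpa using hFlip b b z z' ω ω σ σ'
  have hFa : ∀ b b' z σ, |F b z ω σ - F b' z ω σ| ≤ LF * |b - b'| :=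
    fun b b' z σ => by simpa using hFlip b b' z z ω ω σ σ
  have hint : ∀ b, Integrable (g b) ν := fun b =>
    integrable_delayed hτT (fun z σ => hFbdd b z ω σ) hLF (hG b) hθK
  have hμν : |(∫ p, g a p ∂μ) - ∫ p, g a p ∂ν| ≤ (MF + LF) * dBLt τ T hτT K t μ ν :=
    abs_integral_sub_le_mul_dBLt hτT hMF hLF (fun p => hFbdd a _ ω p.2)
      (abs_delayed_sub_le_mul_dKt hτT hLF (hG a) (hτbar ω) hθK ht.1)
  have hνν : |(∫ p, g a p ∂ν) - ∫ p, g a' p ∂ν| ≤ LF * |a - a'| := by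
    rw [← integral_sub (hint a) (hint a')]
    exact abs_integral_le_of_forall_abs_le fun p => hFa a a' _ _
  have haa' :
      |a - a'| ≤ sSup ((fun s => |eval τ T hτT x s - eval τ T hτT y s|) '' Set.Icc (-τ) t) :=
    abs_eval_sub_le_sSup_image hτT x y ⟨by linarith [ht.1], le_rfl⟩
  calc |(∫ p, g a p ∂μ) - ∫ p, g a' p ∂ν|
      ≤ |(∫ p, g a p ∂μ) - ∫ p, g a p ∂ν| + |(∫ p, g a p ∂ν) - ∫ p, g a' p ∂ν| :=
        abs_sub_le _ _ _
    _ ≤ (MF + LF) * dBLt τ T hτT K t μ ν + LF * |a - a'| := add_le_add hμν hνν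
    _ ≤ _ := by rw [mul_add]; gcongr; linarith

/-- the drift of the delayed Kuramoto-type model,
`f(t,x,μ,ω) = ∫ F(x(t), z(t-τ̄(ω,σ)), ω, σ) dμ(z,σ)`, satisfies
`|f(t,x,μ,ω) − f(t,y,ν,ω)| ≤ ‖F‖_BL (d^t_BL(μ,ν) + sup_{s∈[-τ,t]} |x(s)-y(s)|)`. -/
theorem delayed_kuramoto_drift_lipschitz
    (τ T : ℝ) (hτ : 0 < τ) (hT : 0 < T) (hτT : -τ ≤ T) (d : ℕ)
    (K : ℝ) (hK : 0 ≤ K) (t : ℝ) (ht : t ∈ Set.Icc (0 : ℝ) T)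
    (F : ℝ → ℝ → EuclideanSpace ℝ (Fin d) → EuclideanSpace ℝ (Fin d) → ℝ)
    (MF LF : ℝ) (hMF : 0 ≤ MF) (hLF : 0 ≤ LF)
    (hFbdd : ∀ a b ω σ, |F a b ω σ| ≤ MF)
    (hFlip : ∀ a a' b b' ω ω' σ σ',
      |F a b ω σ - F a' b' ω' σ'| ≤
        LF * (|a - a'| + |b - b'| + dist ω ω' + dist σ σ'))
    (τbar : EuclideanSpace ℝ (Fin d) → EuclideanSpace ℝ (Fin d) → ℝ)
    (hτbar : ∀ ω σ, τbar ω σ ∈ Set.Icc (0 : ℝ) τ)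
    (hτbarLip : ∀ ω ω' σ σ',
      |τbar ω σ - τbar ω' σ'| ≤ K * (dist ω ω' + dist σ σ'))
    (x y : PathSp τ T)
    (μ ν : Measure (PathSp τ T × EuclideanSpace ℝ (Fin d)))
    (hμ : IsProbabilityMeasure μ) (hν : IsProbabilityMeasure ν)
    (ω : EuclideanSpace ℝ (Fin d)) :
    |(∫ p, F (eval τ T hτT x t) (eval τ T hτT p.1 (t - τbar ω p.2)) ω p.2 ∂μ) -
        ∫ p, F (eval τ T hτT y t) (eval τ T hτT p.1 (t - τbar ω p.2)) ω p.2 ∂ν| ≤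
      (MF + LF) * (dBLt τ T hτT K t μ ν +
        sSup ((fun s => |eval τ T hτT x s - eval τ T hτT y s|) '' Set.Icc (-τ) t)) :=
  delayed_kuramoto_drift_lipschitz_general τ T hτ hτT d K t ht F MF LF hMF hLF hFbdd hFlip τbar
    hτbar hτbarLip x y μ ν hμ hν ω
end

section
/- Fix τ > 0, t ≥ −τ, K ≥ 0 and d ∈ ℕ. The function d_{K,t} on (C([−τ,t];ℝ) × ℝ^d) × (C([−τ,t];ℝ) × ℝ^d) defined by d_{K,t}((x,ω),(x',ω'))^2 = |ω − ω'|^2 + ( sup{ |x(s) − x'(u)| : s, u ∈ [−τ,t], |s − u| ≤ K|ω − ω'| } )^2 is a metric: it is nonnegative, symmetric, vanishes exactly on the diagonal, and satisfies the triangle inequality. -/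
open scoped ENNReal

private lemma dKt_bddAux (τ t : ℝ) (p q : C(Set.Icc (-τ) t, ℝ))
    (P : Set.Icc (-τ) t → Set.Icc (-τ) t → Prop) :
    BddAbove {r : ℝ | ∃ s u : Set.Icc (-τ) t, P s u ∧ r = |p s - q u|} := by
  have hc : IsCompact (Set.range fun su : Set.Icc (-τ) t × Set.Icc (-τ) t =>
      |p su.1 - q su.2|) := isCompact_range (by fun_prop)
  refine hc.bddAbove.mono ?_
  rintro r ⟨s, u, _, rfl⟩; exact ⟨(s, u), rfl⟩

private lemma dKt_sqrtTri {a b A B : ℝ} (ha : 0 ≤ a) (hb : 0 ≤ b) (hA : 0 ≤ A) (hB : 0 ≤ B) :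
    Real.sqrt ((a+b)^2 + (A+B)^2) ≤ Real.sqrt (a^2+A^2) + Real.sqrt (b^2+B^2) := by
  set s1 := Real.sqrt (a^2+A^2) with hs1
  set s2 := Real.sqrt (b^2+B^2) with hs2
  have h1 : s1^2 = a^2+A^2 := Real.sq_sqrt (by positivity)
  have h2 : s2^2 = b^2+B^2 := Real.sq_sqrt (by positivity)
  have h1' : 0 ≤ s1 := Real.sqrt_nonneg _
  have h2' : 0 ≤ s2 := Real.sqrt_nonneg _
  rw [show ((a+b)^2 + (A+B)^2 : ℝ) = a^2+A^2 + (b^2+B^2) + 2*(a*b+A*B) by ring]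
  have key : a*b + A*B ≤ s1 * s2 := by
    nlinarith [sq_nonneg (a*B - A*b), sq_nonneg (s1*s2 - (a*b+A*B)), mul_nonneg h1' h2']
  calc Real.sqrt (a^2+A^2 + (b^2+B^2) + 2*(a*b+A*B))
      ≤ Real.sqrt ((s1+s2)^2) := by apply Real.sqrt_le_sqrt; nlinarith
    _ = s1 + s2 := Real.sqrt_sq (by linarith)

private lemma dKt_clampAux {lo hi s u Ka Kb : ℝ} (hKa : 0 ≤ Ka) (hKb : 0 ≤ Kb)
    (hs1 : lo ≤ s) (hs2 : s ≤ hi) (hu1 : lo ≤ u) (hu2 : u ≤ hi)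
    (h : |s - u| ≤ Ka + Kb) :
    ∃ v, lo ≤ v ∧ v ≤ hi ∧ |s - v| ≤ Ka ∧ |v - u| ≤ Kb := by
  obtain ⟨hl, hr⟩ := abs_le.mp h
  refine ⟨s + max (-Ka) (min Ka (u - s)), ?_, ?_, abs_le.mpr ⟨?_, ?_⟩, abs_le.mpr ⟨?_, ?_⟩⟩ <;>
    rw [min_def, max_def] <;> split_ifs <;> linarith

/-- The function `d_{K,t}` on `C([-τ,t];ℝ) × ℝ^d` given by
`d_{K,t}((x,ω),(x',ω'))² = |ω-ω'|² + (sup{ |x(s)-x'(u)| : s,u ∈ [-τ,t], |s-u| ≤ K|ω-ω'| })²`. -/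
noncomputable def dKtSq (τ t : ℝ) {d : ℕ} (K : ℝ)
    (p q : C(Set.Icc (-τ) t, ℝ) × EuclideanSpace ℝ (Fin d)) : ℝ :=
  Real.sqrt ((dist p.2 q.2) ^ 2 +
    (sSup {r : ℝ | ∃ s u : Set.Icc (-τ) t,
      |(s : ℝ) - (u : ℝ)| ≤ K * dist p.2 q.2 ∧ r = |p.1 s - q.1 u|}) ^ 2)

/-- `d_{K,t}` is a metric on `C([-τ,t];ℝ) × ℝ^d`: nonnegative, symmetric,
vanishing exactly on the diagonal, and satisfying the triangle inequality. -/
theorem dKtSq_is_metric (τ t : ℝ) (hτ : 0 < τ) (ht : -τ ≤ t)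
    (d : ℕ) (K : ℝ) (hK : 0 ≤ K) :
    (∀ p q : C(Set.Icc (-τ) t, ℝ) × EuclideanSpace ℝ (Fin d),
        0 ≤ dKtSq τ t K p q) ∧
    (∀ p q : C(Set.Icc (-τ) t, ℝ) × EuclideanSpace ℝ (Fin d),
        dKtSq τ t K p q = dKtSq τ t K q p) ∧
    (∀ p q : C(Set.Icc (-τ) t, ℝ) × EuclideanSpace ℝ (Fin d),
        dKtSq τ t K p q = 0 ↔ p = q) ∧
    (∀ p q r : C(Set.Icc (-τ) t, ℝ) × EuclideanSpace ℝ (Fin d),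
        dKtSq τ t K p r ≤ dKtSq τ t K p q + dKtSq τ t K q r) := by
  -- Basic objects
  set I := Set.Icc (-τ) t with hI
  have hx0 : (-τ : ℝ) ∈ I := ⟨le_refl _, ht⟩
  let x0 : I := ⟨-τ, hx0⟩
  -- The sup-set and its basics
  set S := fun (p q : C(I, ℝ) × EuclideanSpace ℝ (Fin d)) =>
    {r : ℝ | ∃ s u : I, |(s : ℝ) - (u : ℝ)| ≤ K * dist p.2 q.2 ∧ r = |p.1 s - q.1 u|} with hS
  have hbdd : ∀ p q, BddAbove (S p q) := fun p q => dKt_bddAux τ t p.1 q.1 _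
  have hmem0 : ∀ p q, |p.1 x0 - q.1 x0| ∈ S p q := by
    intro p q
    exact ⟨x0, x0, by simpa using mul_nonneg hK dist_nonneg, rfl⟩
  have hSnonneg : ∀ p q, 0 ≤ sSup (S p q) :=
    fun p q => le_trans (abs_nonneg _) (le_csSup (hbdd p q) (hmem0 p q))
  have hdef : ∀ p q, dKtSq τ t K p q = Real.sqrt ((dist p.2 q.2) ^ 2 + (sSup (S p q)) ^ 2) :=
    fun p q => rfl
  -- Symmetry of the sup-set
  have hSsymm : ∀ p q, S p q = S q p := by
    intro p q
    ext r
    constructor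
    · rintro ⟨s, u, hsu, rfl⟩
      exact ⟨u, s, by rwa [abs_sub_comm, dist_comm], by rw [abs_sub_comm]⟩
    · rintro ⟨s, u, hsu, rfl⟩
      exact ⟨u, s, by rwa [abs_sub_comm, dist_comm], by rw [abs_sub_comm]⟩
  refine ⟨fun p q => Real.sqrt_nonneg _, ?_, ?_, ?_⟩
  · -- symmetry
    intro p q
    rw [hdef, hdef, hSsymm, dist_comm]
  · -- zero iff equal
    intro p q
    constructor
    · intro h
      rw [hdef] at h
      have hle : (dist p.2 q.2) ^ 2 + (sSup (S p q)) ^ 2 ≤ 0 := by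
        by_contra hc
        push_neg at hc
        exact absurd h (ne_of_gt (Real.sqrt_pos.mpr hc))
      have hd2 : dist p.2 q.2 = 0 := by
        have := sq_nonneg (sSup (S p q))
        have := sq_nonneg (dist p.2 q.2)
        have h0 : (dist p.2 q.2) ^ 2 = 0 := by nlinarith
        exact (pow_eq_zero_iff two_ne_zero).mp h0
      have hS0 : sSup (S p q) = 0 := by
        have h1 := sq_nonneg (dist p.2 q.2)
        have h2 := sq_nonneg (sSup (S p q))
        have h3 : (sSup (S p q)) ^ 2 = 0 := by nlinarith
        have := hSnonneg p q
        nlinarith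
      have hfun : p.1 = q.1 := by
        ext s
        have hmem : |p.1 s - q.1 s| ∈ S p q :=
          ⟨s, s, by simpa using mul_nonneg hK dist_nonneg, rfl⟩
        have := le_csSup (hbdd p q) hmem
        rw [hS0] at this
        have := abs_nonpos_iff.mp this
        linarith [sub_eq_zero.mp this] <;> skip
      exact Prod.ext hfun (dist_eq_zero.mp hd2)
    · rintro rfl
      rw [hdef]
      have hd0 : dist p.2 p.2 = 0 := dist_self _
      have hSet : S p p = {0} := by
        ext r
        constructor
        · rintro ⟨s, u, hsu, rfl⟩
          rw [hd0, mul_zero] at hsu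
          have : (s : ℝ) = u := by
            have := abs_nonpos_iff.mp hsu
            linarith [sub_eq_zero.mp this]
          have : s = u := Subtype.ext this
          simp [this]
        · rintro rfl
          have := hmem0 p p
          simpa using this
      rw [hSet, hd0, csSup_singleton]
      simp
  · -- triangle inequality
    intro p q r
    set a := dist p.2 q.2 with hadef
    set b := dist q.2 r.2 with hbdef
    set c := dist p.2 r.2 with hcdef
    set A := sSup (S p q) with hAdef
    set B := sSup (S q r) with hBdef
    set C := sSup (S p r) with hCdef
    have hab : c ≤ a + b := dist_triangle _ _ _
    have hCle : C ≤ A + B := by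
      apply csSup_le ⟨_, hmem0 p r⟩
      rintro x ⟨s, u, hsu, rfl⟩
      -- find an intermediate point v
      have hsu' : |(s : ℝ) - (u : ℝ)| ≤ K * a + K * b := by
        calc |(s : ℝ) - (u : ℝ)| ≤ K * c := hsu
          _ ≤ K * (a + b) := by
              apply mul_le_mul_of_nonneg_left hab hK
          _ = K * a + K * b := by ring
      obtain ⟨v, hv1, hv2, hv3, hv4⟩ := dKt_clampAux (mul_nonneg hK dist_nonneg)
        (mul_nonneg hK dist_nonneg) s.2.1 s.2.2 u.2.1 u.2.2 hsu'
      let vI : I := ⟨v, hv1, hv2⟩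
      have hA' : |p.1 s - q.1 vI| ≤ A := le_csSup (hbdd p q) ⟨s, vI, hv3, rfl⟩
      have hB' : |q.1 vI - r.1 u| ≤ B := le_csSup (hbdd q r) ⟨vI, u, hv4, rfl⟩
      calc |p.1 s - r.1 u| ≤ |p.1 s - q.1 vI| + |q.1 vI - r.1 u| := abs_sub_le _ _ _
        _ ≤ A + B := add_le_add hA' hB'
    rw [hdef, hdef, hdef]
    calc Real.sqrt (c ^ 2 + C ^ 2)
        ≤ Real.sqrt ((a + b) ^ 2 + (A + B) ^ 2) := by
          apply Real.sqrt_le_sqrt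
          have h1 : c ^ 2 ≤ (a + b) ^ 2 := by
            apply pow_le_pow_left₀ dist_nonneg hab
          have h2 : C ^ 2 ≤ (A + B) ^ 2 := by
            apply pow_le_pow_left₀ (hSnonneg p r) hCle
          linarith
      _ ≤ Real.sqrt (a ^ 2 + A ^ 2) + Real.sqrt (b ^ 2 + B ^ 2) :=
          dKt_sqrtTri dist_nonneg dist_nonneg (hSnonneg p q) (hSnonneg q r)
end
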